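/- arXiv:1405.1938 — 5 statements merged into one kernel-verified Lean document; each statement's English description precedes it below -/
import Mathlib

section
/- Let n > 1 and let ρ ∈ ℂ be a primitive n-th root of unity. Let G be the kernel of the surjective group homomorphism (ℤ/nℤ)³ → ℤ/nℤ, (a,b,c) ↦ a+b+c, acting on the polynomial ring ℂ[x,y,z] by (a,b,c)·x = ρ^a x, (a,b,c)·y = ρ^b y, (a,b,c)·z = ρ^c z (extended as ℂ-algebra automorphisms). Then the ring of invariants ℂ[x,y,z]^G equals the ℂ-subalgebra generated by x^n, y^n, z^n and xyz. -/
/-!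
The group acts diagonally, so it scales each monomial `x^a y^b z^c` by a character and a
polynomial is invariant exactly when each monomial of its support is. The monomial is fixed by
all `(g₀, g₁, g₂)` with `g₀ + g₁ + g₂ = 0` iff `g₀ a + g₁ b + g₂ c = 0` in `ℤ/n` for all of them,
i.e. iff `a ≡ b ≡ c (mod n)`; writing `r` for the common residue, the monomial is then
`(xyz)^r (x^n)^(a/n) (y^n)^(b/n) (z^n)^(c/n)`. Conversely the four generators are invariant.
-/

open MvPolynomial

namespace MvPolynomial

variable {R σ : Type*} [CommSemiring R]

theorem aeval_smul_X_monomial (c : σ → R) (d : σ →₀ ℕ) (a : R) :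
    aeval (fun i => c i • X i) (monomial d a) =
      monomial d ((d.prod fun i k => c i ^ k) * a) := by
  have hC : ∀ i k, (c i • X i : MvPolynomial σ R) ^ k = C (c i ^ k) * X i ^ k := fun i k => by
    rw [smul_pow, smul_eq_C_mul]
  rw [aeval_monomial, monomial_eq]
  simp only [hC, Finsupp.prod_mul, ← map_finsuppProd, algebraMap_eq, map_mul]
  ring

theorem coeff_aeval_smul_X (c : σ → R) (p : MvPolynomial σ R) (d : σ →₀ ℕ) :
    coeff d (aeval (fun i => c i • X i) p) = (d.prod fun i k => c i ^ k) * coeff d p := by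
  induction p using MvPolynomial.induction_on' with
  | monomial e a =>
    classical
    rw [aeval_smul_X_monomial, coeff_monomial, coeff_monomial]
    split_ifs with h
    · rw [h]
    · rw [mul_zero]
  | add p q hp hq => rw [map_add, coeff_add, coeff_add, hp, hq, mul_add]

theorem prod_pow_eq_one_of_aeval_smul_X_eq_self [IsDomain R] {c : σ → R} {p : MvPolynomial σ R}
    (hp : aeval (fun i => c i • X i) p = p) {d : σ →₀ ℕ} (hd : d ∈ p.support) :
    (d.prod fun i k => c i ^ k) = 1 :=
  mul_right_cancel₀ (mem_support_iff.mp hd) <| by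
    rw [← coeff_aeval_smul_X, hp, one_mul]

end MvPolynomial

theorem IsPrimitiveRoot.pow_eq_one_iff_natCast_eq_zero {M : Type*} [CommMonoid M] {ρ : M} {n : ℕ}
    (hρ : IsPrimitiveRoot ρ n) {k : ℕ} : ρ ^ k = 1 ↔ (k : ZMod n) = 0 := by
  rw [hρ.pow_eq_one_iff_dvd, ZMod.natCast_eq_zero_iff]

theorem IsPrimitiveRoot.prod_pow_val_pow_eq_one_iff {M ι : Type*} [CommMonoid M] [Fintype ι]
    {ρ : M} {n : ℕ} [NeZero n] (hρ : IsPrimitiveRoot ρ n) (g : ι → ZMod n) (e : ι → ℕ) :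
    ∏ i, (ρ ^ (g i).val) ^ e i = 1 ↔ ∑ i, g i * e i = 0 := by
  simp only [← pow_mul, Finset.prod_pow_eq_pow_sum, hρ.pow_eq_one_iff_natCast_eq_zero,
    Nat.cast_sum, Nat.cast_mul, ZMod.natCast_zmod_val]

theorem modEq_of_forall_sum_mul_eq_zero {n : ℕ} (e : Fin 3 → ℕ)
    (he : ∀ g : Fin 3 → ZMod n, g 0 + g 1 + g 2 = 0 → ∑ i, g i * e i = 0) :
    e 0 ≡ e 1 [MOD n] ∧ e 1 ≡ e 2 [MOD n] := by
  simp only [← ZMod.natCast_eq_natCast_iff]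
  have h01 := he ![1, -1, 0] (by simp)
  have h12 := he ![0, 1, -1] (by simp)
  simp only [Fin.sum_univ_three, Matrix.cons_val_zero, Matrix.cons_val_one, Matrix.cons_val_two,
    Matrix.head_cons, Matrix.tail_cons] at h01 h12
  exact ⟨by linear_combination h01, by linear_combination h12⟩

section ThreeVariables

variable {R : Type*} [CommSemiring R] (n : ℕ)

theorem monomial_mem_adjoin_of_modEq {d : Fin 3 →₀ ℕ} (h01 : d 0 ≡ d 1 [MOD n])
    (h12 : d 1 ≡ d 2 [MOD n]) (a : R) :
    monomial d a ∈ Algebra.adjoin R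
      {(X 0 : MvPolynomial (Fin 3) R) ^ n, X 1 ^ n, X 2 ^ n, X 0 * X 1 * X 2} := by
  set A := Algebra.adjoin R
    {(X 0 : MvPolynomial (Fin 3) R) ^ n, X 1 ^ n, X 2 ^ n, X 0 * X 1 * X 2}
  set r := d 0 % n
  have hX : ∀ i, (X i : MvPolynomial (Fin 3) R) ^ d i = (X i ^ n) ^ (d i / n) * X i ^ r := by
    have hr : ∀ i, d i % n = r := by
      intro i; fin_cases i
      exacts [rfl, h01.symm, (h01.trans h12).symm]
    intro i
    rw [← pow_mul, ← pow_add, ← hr i, Nat.div_add_mod]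
  have hmonomial : monomial d a = C a * (X 0 * X 1 * X 2) ^ r *
      ((X 0 ^ n) ^ (d 0 / n) * (X 1 ^ n) ^ (d 1 / n) * (X 2 ^ n) ^ (d 2 / n)) := by
    rw [monomial_eq, Finsupp.prod_pow, Fin.prod_univ_three, hX 0, hX 1, hX 2]
    ring
  have gen : ∀ {x}, x ∈ ({X 0 ^ n, X 1 ^ n, X 2 ^ n, X 0 * X 1 * X 2} :
      Set (MvPolynomial (Fin 3) R)) → x ∈ A := fun hx => Algebra.subset_adjoin hx
  rw [hmonomial]
  refine mul_mem (mul_mem (A.algebraMap_mem a) (pow_mem (gen ?_) r))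
    (mul_mem (mul_mem (pow_mem (gen ?_) _) (pow_mem (gen ?_) _)) (pow_mem (gen ?_) _)) <;> simp

theorem aeval_smul_X_eq_self_of_mem_adjoin {ρ : R} (hρ : IsPrimitiveRoot ρ n) [NeZero n]
    {g : Fin 3 → ZMod n} (hg : g 0 + g 1 + g 2 = 0) {p : MvPolynomial (Fin 3) R}
    (hp : p ∈ Algebra.adjoin R {X 0 ^ n, X 1 ^ n, X 2 ^ n, X 0 * X 1 * X 2}) :
    aeval (fun i => ρ ^ (g i).val • X i) p = p := by
  suffices Algebra.adjoin R {X 0 ^ n, X 1 ^ n, X 2 ^ n, X 0 * X 1 * X 2} ≤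
      AlgHom.equalizer (aeval fun i => ρ ^ (g i).val • X i) (AlgHom.id R _) from this hp
  have hXpow : ∀ i, aeval (R := R) (fun i => ρ ^ (g i).val • (X i : MvPolynomial (Fin 3) R))
      (X i ^ n) = X i ^ n := fun i => by
    rw [map_pow, aeval_X, smul_pow, ← pow_mul, mul_comm, pow_mul, hρ.pow_eq_one, one_pow, one_smul]
  have hxyz : ρ ^ (g 0).val * ρ ^ (g 1).val * ρ ^ (g 2).val = 1 := by
    simpa [Fin.prod_univ_three, Fin.sum_univ_three, hg] using
      (hρ.prod_pow_val_pow_eq_one_iff g fun _ => 1).2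
  rw [Algebra.adjoin_le_iff]
  rintro x (rfl | rfl | rfl | rfl)
  · exact hXpow 0
  · exact hXpow 1
  · exact hXpow 2
  · change aeval _ _ = _
    rw [map_mul, map_mul, aeval_X, aeval_X, aeval_X, smul_mul_smul_comm, smul_mul_smul_comm, hxyz,
      one_smul, AlgHom.id_apply]

end ThreeVariables

/-- For `n > 1` and `ρ` a primitive `n`-th root of unity, the invariants of
`ℂ[x,y,z]` under the action of `G = ker((ℤ/n)³ → ℤ/n, (a,b,c) ↦ a+b+c)`, where `(a,b,c)`
acts by `x ↦ ρ^a x`, `y ↦ ρ^b y`, `z ↦ ρ^c z`, form the subalgebra generated by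
`x^n, y^n, z^n, xyz`. -/
theorem invariants_eq_adjoin (n : ℕ) (hn : 1 < n) (ρ : ℂ) (hρ : IsPrimitiveRoot ρ n) :
    {p : MvPolynomial (Fin 3) ℂ |
      ∀ g : Fin 3 → ZMod n, g 0 + g 1 + g 2 = 0 →
        MvPolynomial.aeval (fun i : Fin 3 => (ρ ^ (g i).val) • (MvPolynomial.X i)) p = p} =
    ↑(Algebra.adjoin ℂ
        ({(MvPolynomial.X 0 : MvPolynomial (Fin 3) ℂ) ^ n, (MvPolynomial.X 1) ^ n,
          (MvPolynomial.X 2) ^ n,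
          (MvPolynomial.X 0) * (MvPolynomial.X 1) * (MvPolynomial.X 2)} :
          Set (MvPolynomial (Fin 3) ℂ))) := by
  have : NeZero n := ⟨by omega⟩
  ext p
  refine ⟨fun hp => ?_, fun hp g hg => aeval_smul_X_eq_self_of_mem_adjoin n hρ hg hp⟩
  rw [SetLike.mem_coe, p.as_sum]
  refine Subalgebra.sum_mem _ fun d hd => ?_
  have hweight : ∀ g : Fin 3 → ZMod n, g 0 + g 1 + g 2 = 0 → ∑ i, g i * d i = 0 := fun g hg => by
    rw [← hρ.prod_pow_val_pow_eq_one_iff, ← Finsupp.prod_pow]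
    exact prod_pow_eq_one_of_aeval_smul_X_eq_self (hp g hg) hd
  obtain ⟨h01, h12⟩ := modEq_of_forall_sum_mul_eq_zero d hweight
  exact monomial_mem_adjoin_of_modEq n h01 h12 _
end

section
/- Let n > 1 and let ρ ∈ ℂ be a primitive n-th root of unity. Let A = ℂ_ρ[x,y,z] be the quotient of the free ℂ-algebra on generators x, y, z by the two-sided ideal generated by xy − ρyx, yz − ρzy, zx − ρxz. Then the center Z(A) equals the ℂ-subalgebra of A generated by the images of x^n, y^n, z^n and xyz. -/
/-- The generators of the free algebra on three variables. -/
noncomputable def freeGen (i : Fin 3) : FreeAlgebra ℂ (Fin 3) := FreeAlgebra.ι ℂ i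

/-- The defining relations of the quantum affine 3-space `ℂ_ρ[x,y,z]`:
`xy = ρ yx`, `yz = ρ zy`, `zx = ρ xz`. -/
inductive QuantumRel (ρ : ℂ) : FreeAlgebra ℂ (Fin 3) → FreeAlgebra ℂ (Fin 3) → Prop
  | xy : QuantumRel ρ (freeGen 0 * freeGen 1) (ρ • (freeGen 1 * freeGen 0))
  | yz : QuantumRel ρ (freeGen 1 * freeGen 2) (ρ • (freeGen 2 * freeGen 1))
  | zx : QuantumRel ρ (freeGen 2 * freeGen 0) (ρ • (freeGen 0 * freeGen 2))

/-- The quantum affine 3-space `ℂ_ρ[x,y,z]`. -/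
noncomputable abbrev QuantumAlg (ρ : ℂ) := RingQuot (QuantumRel ρ)

/-- The image of `x` in `ℂ_ρ[x,y,z]`. -/
noncomputable def qX (ρ : ℂ) : QuantumAlg ρ := RingQuot.mkAlgHom ℂ (QuantumRel ρ) (freeGen 0)

/-- The image of `y` in `ℂ_ρ[x,y,z]`. -/
noncomputable def qY (ρ : ℂ) : QuantumAlg ρ := RingQuot.mkAlgHom ℂ (QuantumRel ρ) (freeGen 1)

/-- The image of `z` in `ℂ_ρ[x,y,z]`. -/
noncomputable def qZ (ρ : ℂ) : QuantumAlg ρ := RingQuot.mkAlgHom ℂ (QuantumRel ρ) (freeGen 2)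

/-!
The ordered monomials `x^a y^b z^c` span `ℂ_ρ[x,y,z]`, since the relations reorder any word at
the cost of a power of `ρ`. They are linearly independent: in the representation on `ℕ³ →₀ ℂ`
with `x e(a,b,c) = ρ^b e(a+1,b,c)`, `y e(a,b,c) = ρ^c e(a,b+1,c)`, `z e(a,b,c) = ρ^a e(a,b,c+1)`,
the monomial `x^a y^b z^c` sends `e(0,0,0)` to a nonzero multiple of `e(a,b,c)`.

In this basis, for `m = x^a y^b z^c` one has `x m = m'` and `m x = ρ^(c-b) m'` with the same
monomial `m'`, and dually `m z = m''`, `z m = ρ^(a-b) m''`. Hence a central element only involves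
monomials with `ρ^a = ρ^b = ρ^c`. Such monomials commute with `x`, `y`, `z`, and, writing
`(a, b, c) = (n i + r, n j + r, n k + r)` with `r = a % n`, each is a nonzero multiple of
`(x^n)^i (y^n)^j (z^n)^k (xyz)^r`.
-/

section Relations

variable (ρ : ℂ)

lemma qX_mul_qY : qX ρ * qY ρ = ρ • (qY ρ * qX ρ) := by
  simpa [qX, qY] using RingQuot.mkAlgHom_rel ℂ (QuantumRel.xy (ρ := ρ))

lemma qY_mul_qZ : qY ρ * qZ ρ = ρ • (qZ ρ * qY ρ) := by
  simpa [qY, qZ] using RingQuot.mkAlgHom_rel ℂ (QuantumRel.yz (ρ := ρ))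

lemma qZ_mul_qX : qZ ρ * qX ρ = ρ • (qX ρ * qZ ρ) := by
  simpa [qZ, qX] using RingQuot.mkAlgHom_rel ℂ (QuantumRel.zx (ρ := ρ))

end Relations

lemma pow_mul_pow_of_mul_eq_smul {R A : Type*} [CommSemiring R] [Semiring A] [Algebra R A]
    {s : R} {u v : A} (h : u * v = s • (v * u)) (m k : ℕ) :
    u ^ m * v ^ k = s ^ (m * k) • (v ^ k * u ^ m) := by
  have hv : ∀ k : ℕ, u * v ^ k = s ^ k • (v ^ k * u) := by
    intro k
    induction k with
    | zero => simp
    | succ k ih =>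
      rw [pow_succ, ← mul_assoc, ih, smul_mul_assoc, mul_assoc, h, mul_smul_comm, smul_smul,
        ← mul_assoc, ← pow_succ, pow_succ s]
  induction m with
  | zero => simp
  | succ m ih =>
    rw [pow_succ, mul_assoc, hv, mul_smul_comm, ← mul_assoc, ih, smul_mul_assoc, smul_smul,
      mul_assoc, ← pow_succ, ← pow_add, add_mul, one_mul, add_comm]

lemma pow_mul_inv_pow_eq_one_iff {G₀ : Type*} [GroupWithZero G₀] {a : G₀} (ha : a ≠ 0) (k l : ℕ) :
    a ^ k * a⁻¹ ^ l = 1 ↔ a ^ k = a ^ l := by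
  rw [inv_pow, mul_inv_eq_one₀ (pow_ne_zero l ha)]

lemma Module.Basis.repr_apply_eq_mul_of_apply_basis_eq_smul {R M ι : Type*} [CommSemiring R]
    [AddCommMonoid M] [Module R M] (b : Module.Basis ι R M) {f : M →ₗ[R] M} {g : ι → ι}
    (hg : Function.Injective g) {w : ι → R} (hf : ∀ j, f (b j) = w j • b (g j)) (u : M) (i : ι) :
    b.repr (f u) (g i) = w i * b.repr u i := by
  have key : Finsupp.lapply (g i) ∘ₗ b.repr.toLinearMap ∘ₗ f =
      w i • (Finsupp.lapply i ∘ₗ b.repr.toLinearMap) := b.ext fun j => by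
    by_cases hji : j = i
    · simp [hf, hji]
    · simp [hf, hg.ne hji, hji]
  exact LinearMap.congr_fun key u

noncomputable def qMonomial (ρ : ℂ) (v : ℕ × ℕ × ℕ) : QuantumAlg ρ :=
  qX ρ ^ v.1 * qY ρ ^ v.2.1 * qZ ρ ^ v.2.2

section Monomials

variable {ρ : ℂ}

lemma qMonomial_mul_qMonomial (hρ : ρ ≠ 0) (v w : ℕ × ℕ × ℕ) :
    qMonomial ρ v * qMonomial ρ w =
      (ρ ^ (v.2.2 * w.1) * ρ⁻¹ ^ (v.2.1 * w.1 + v.2.2 * w.2.1)) • qMonomial ρ (v + w) := by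
  obtain ⟨a, b, c⟩ := v
  obtain ⟨a', b', c'⟩ := w
  have hYX : qY ρ * qX ρ = ρ⁻¹ • (qX ρ * qY ρ) := by
    rw [qX_mul_qY, smul_smul, inv_mul_cancel₀ hρ, one_smul]
  have hZY : qZ ρ * qY ρ = ρ⁻¹ • (qY ρ * qZ ρ) := by
    rw [qY_mul_qZ, smul_smul, inv_mul_cancel₀ hρ, one_smul]
  calc qX ρ ^ a * qY ρ ^ b * qZ ρ ^ c * (qX ρ ^ a' * qY ρ ^ b' * qZ ρ ^ c')
    _ = qX ρ ^ a * qY ρ ^ b * (qZ ρ ^ c * qX ρ ^ a') * qY ρ ^ b' * qZ ρ ^ c' := by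
      simp only [mul_assoc]
    _ = ρ ^ (c * a') •
          (qX ρ ^ a * (qY ρ ^ b * qX ρ ^ a') * (qZ ρ ^ c * qY ρ ^ b') * qZ ρ ^ c') := by
      rw [pow_mul_pow_of_mul_eq_smul (qZ_mul_qX ρ)]
      simp only [mul_smul_comm, smul_mul_assoc, mul_assoc]
    _ = _ := by
      rw [pow_mul_pow_of_mul_eq_smul hYX, pow_mul_pow_of_mul_eq_smul hZY]
      simp only [qMonomial, Prod.mk_add_mk, mul_smul_comm, smul_mul_assoc, smul_smul, pow_add,
        mul_assoc]
      congr 1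
      ring

lemma span_range_qMonomial (hρ : ρ ≠ 0) : Submodule.span ℂ (Set.range (qMonomial ρ)) = ⊤ := by
  set p := Submodule.span ℂ (Set.range (qMonomial ρ))
  have hmem : ∀ v, qMonomial ρ v ∈ p := fun v => Submodule.subset_span ⟨v, rfl⟩
  have hmul : p * p ≤ p := by
    rw [Submodule.span_mul_span, Submodule.span_le]
    rintro _ ⟨_, ⟨v, rfl⟩, _, ⟨w, rfl⟩, rfl⟩
    change qMonomial ρ v * qMonomial ρ w ∈ p
    rw [qMonomial_mul_qMonomial hρ]
    exact p.smul_mem _ (hmem _)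
  let S : Subalgebra ℂ (QuantumAlg ρ) :=
    p.toSubalgebra (by simpa [qMonomial] using hmem 0) fun _ _ hx hy =>
      hmul (Submodule.mul_mem_mul hx hy)
  have hS : S = ⊤ := by
    rw [eq_top_iff, ← (AlgHom.range_eq_top _).2 (RingQuot.mkAlgHom_surjective ℂ (QuantumRel ρ)),
      ← Algebra.map_top, ← FreeAlgebra.adjoin_range_ι, AlgHom.map_adjoin, Algebra.adjoin_le_iff]
    rintro _ ⟨_, ⟨i, rfl⟩, rfl⟩
    change _ ∈ p
    fin_cases i
    · simpa [qMonomial, qX, freeGen] using hmem (1, 0, 0)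
    · simpa [qMonomial, qY, freeGen] using hmem (0, 1, 0)
    · simpa [qMonomial, qZ, freeGen] using hmem (0, 0, 1)
  simpa [S] using congrArg Subalgebra.toSubmodule hS

end Monomials

noncomputable def weightedShift (ρ : ℂ) (φ : ℕ × ℕ × ℕ → ℕ) (d : ℕ × ℕ × ℕ) :
    Module.End ℂ (ℕ × ℕ × ℕ →₀ ℂ) :=
  Finsupp.linearCombination ℂ fun w => ρ ^ φ w • Finsupp.single (w + d) 1

section WeightedShift

variable (ρ : ℂ) (φ ψ : ℕ × ℕ × ℕ → ℕ) (d e : ℕ × ℕ × ℕ)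

lemma weightedShift_single (w : ℕ × ℕ × ℕ) :
    weightedShift ρ φ d (Finsupp.single w 1) = ρ ^ φ w • Finsupp.single (w + d) 1 := by
  simp [weightedShift]

lemma weightedShift_mul_single (w : ℕ × ℕ × ℕ) :
    (weightedShift ρ φ d * weightedShift ρ ψ e) (Finsupp.single w 1) =
      ρ ^ (ψ w + φ (w + e)) • Finsupp.single (w + e + d) 1 := by
  rw [Module.End.mul_apply, weightedShift_single, map_smul, weightedShift_single, smul_smul,
    pow_add]

lemma weightedShift_pow_single (h : ∀ w, φ (w + d) = φ w) (k : ℕ) (w : ℕ × ℕ × ℕ) :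
    (weightedShift ρ φ d ^ k) (Finsupp.single w 1) =
      ρ ^ (k * φ w) • Finsupp.single (w + k • d) 1 := by
  induction k generalizing w with
  | zero => simp
  | succ k ih =>
    rw [pow_succ, Module.End.mul_apply, weightedShift_single, map_smul, ih, h, smul_smul,
      ← pow_add, succ_nsmul', add_assoc, add_mul, one_mul, add_comm (φ w)]

end WeightedShift

noncomputable def qRep (ρ : ℂ) : QuantumAlg ρ →ₐ[ℂ] Module.End ℂ (ℕ × ℕ × ℕ →₀ ℂ) :=
  RingQuot.liftAlgHom ℂ ⟨FreeAlgebra.lift ℂ ![weightedShift ρ (·.2.1) (1, 0, 0),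
    weightedShift ρ (·.2.2) (0, 1, 0), weightedShift ρ (·.1) (0, 0, 1)], by
      rintro _ _ (_ | _ | _) <;>
      refine Finsupp.lhom_ext' fun w => LinearMap.ext_ring ?_ <;>
      simp only [freeGen, map_mul, map_smul, FreeAlgebra.lift_ι_apply, LinearMap.coe_comp,
        Function.comp_apply, Finsupp.lsingle_apply, LinearMap.smul_apply,
        weightedShift_mul_single, smul_smul, Matrix.cons_val] <;>
      congr 1 <;> simp [← pow_succ'] <;> ring⟩

lemma qRep_qMonomial_single_zero (ρ : ℂ) (v : ℕ × ℕ × ℕ) :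
    qRep ρ (qMonomial ρ v) (Finsupp.single 0 1) =
      ρ ^ (v.2.1 * v.2.2 + v.1 * v.2.1) • Finsupp.single v 1 := by
  have hX : qRep ρ (qX ρ) = weightedShift ρ (·.2.1) (1, 0, 0) := by
    simp [qRep, qX, freeGen, RingQuot.liftAlgHom_mkAlgHom_apply]
  have hY : qRep ρ (qY ρ) = weightedShift ρ (·.2.2) (0, 1, 0) := by
    simp [qRep, qY, freeGen, RingQuot.liftAlgHom_mkAlgHom_apply]
  have hZ : qRep ρ (qZ ρ) = weightedShift ρ (·.1) (0, 0, 1) := by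
    simp [qRep, qZ, freeGen, RingQuot.liftAlgHom_mkAlgHom_apply]
  simp only [qMonomial, map_mul, map_pow, hX, hY, hZ, Module.End.mul_apply]
  rw [weightedShift_pow_single _ _ _ (by simp), map_smul, weightedShift_pow_single _ _ _ (by simp),
    map_smul, map_smul, weightedShift_pow_single _ _ _ (by simp)]
  simp [← pow_add, Prod.mk_zero_zero]

lemma linearIndependent_qMonomial {ρ : ℂ} (hρ : ρ ≠ 0) : LinearIndependent ℂ (qMonomial ρ) := by
  refine LinearIndependent.of_comp
    (LinearMap.applyₗ (Finsupp.single 0 1) ∘ₗ (qRep ρ).toLinearMap) ?_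
  convert Finsupp.linearIndependent_single_one ℂ (ℕ × ℕ × ℕ) |>.units_smul
    fun v => Units.mk0 _ (pow_ne_zero (v.2.1 * v.2.2 + v.1 * v.2.1) hρ) using 1
  ext1 v
  simp [qRep_qMonomial_single_zero]

noncomputable def qMonomialBasis {ρ : ℂ} (hρ : ρ ≠ 0) : Module.Basis (ℕ × ℕ × ℕ) ℂ (QuantumAlg ρ) :=
  .mk (linearIndependent_qMonomial hρ) (span_range_qMonomial hρ).ge

@[simp]
lemma qMonomialBasis_apply {ρ : ℂ} (hρ : ρ ≠ 0) (v : ℕ × ℕ × ℕ) :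
    qMonomialBasis hρ v = qMonomial ρ v := by
  simp [qMonomialBasis]

section Commutation

variable {ρ : ℂ}

lemma qX_mul_qMonomial (v : ℕ × ℕ × ℕ) : qX ρ * qMonomial ρ v = qMonomial ρ (v + (1, 0, 0)) := by
  simp [qMonomial, pow_succ', mul_assoc]

lemma qMonomial_mul_qZ (v : ℕ × ℕ × ℕ) : qMonomial ρ v * qZ ρ = qMonomial ρ (v + (0, 0, 1)) := by
  simp [qMonomial, pow_succ, mul_assoc]

lemma qMonomial_mul_qX (hρ : ρ ≠ 0) (v : ℕ × ℕ × ℕ) :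
    qMonomial ρ v * qX ρ = (ρ ^ v.2.2 * ρ⁻¹ ^ v.2.1) • qMonomial ρ (v + (1, 0, 0)) := by
  simpa [qMonomial] using qMonomial_mul_qMonomial hρ v (1, 0, 0)

lemma qY_mul_qMonomial (hρ : ρ ≠ 0) (v : ℕ × ℕ × ℕ) :
    qY ρ * qMonomial ρ v = ρ⁻¹ ^ v.1 • qMonomial ρ (v + (0, 1, 0)) := by
  simpa [qMonomial, add_comm v] using qMonomial_mul_qMonomial hρ (0, 1, 0) v

lemma qMonomial_mul_qY (hρ : ρ ≠ 0) (v : ℕ × ℕ × ℕ) :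
    qMonomial ρ v * qY ρ = ρ⁻¹ ^ v.2.2 • qMonomial ρ (v + (0, 1, 0)) := by
  simpa [qMonomial] using qMonomial_mul_qMonomial hρ v (0, 1, 0)

lemma qZ_mul_qMonomial (hρ : ρ ≠ 0) (v : ℕ × ℕ × ℕ) :
    qZ ρ * qMonomial ρ v = (ρ ^ v.1 * ρ⁻¹ ^ v.2.1) • qMonomial ρ (v + (0, 0, 1)) := by
  simpa [qMonomial, add_comm v] using qMonomial_mul_qMonomial hρ (0, 0, 1) v

end Commutation

section Center

variable {ρ : ℂ}

lemma qMonomial_mem_center (hρ : ρ ≠ 0) {v : ℕ × ℕ × ℕ} (hxy : ρ ^ v.1 = ρ ^ v.2.1)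
    (hyz : ρ ^ v.2.1 = ρ ^ v.2.2) : qMonomial ρ v ∈ Subalgebra.center ℂ (QuantumAlg ρ) := by
  have hX : Commute (qX ρ) (qMonomial ρ v) := by
    rw [Commute, SemiconjBy, qX_mul_qMonomial, qMonomial_mul_qX hρ,
      (pow_mul_inv_pow_eq_one_iff hρ _ _).mpr hyz.symm, one_smul]
  have hY : Commute (qY ρ) (qMonomial ρ v) := by
    rw [Commute, SemiconjBy, qY_mul_qMonomial hρ, qMonomial_mul_qY hρ, inv_pow, inv_pow, hxy, hyz]
  have hZ : Commute (qZ ρ) (qMonomial ρ v) := by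
    rw [Commute, SemiconjBy, qZ_mul_qMonomial hρ, qMonomial_mul_qZ,
      (pow_mul_inv_pow_eq_one_iff hρ _ _).mpr hxy, one_smul]
  rw [Subalgebra.mem_center_iff]
  intro u
  induction (span_range_qMonomial hρ).ge (Submodule.mem_top : u ∈ ⊤)
    using Submodule.span_induction with
  | mem _ h =>
    obtain ⟨w, rfl⟩ := h
    exact ((hX.pow_left _).mul_left (hY.pow_left _)).mul_left (hZ.pow_left _)
  | zero => simp
  | add u u' _ _ hu hu' => rw [add_mul, mul_add, hu, hu']
  | smul r u _ hu => rw [smul_mul_assoc, mul_smul_comm, hu]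

lemma pow_eq_pow_of_mem_center (hρ : ρ ≠ 0) {u : QuantumAlg ρ}
    (hu : u ∈ Subalgebra.center ℂ (QuantumAlg ρ)) {v : ℕ × ℕ × ℕ}
    (hv : (qMonomialBasis hρ).repr u v ≠ 0) : ρ ^ v.1 = ρ ^ v.2.1 ∧ ρ ^ v.2.1 = ρ ^ v.2.2 := by
  set b := qMonomialBasis hρ
  have hcomm := Subalgebra.mem_center_iff.mp hu
  have hweight : ∀ (g : QuantumAlg ρ) (d : ℕ × ℕ × ℕ) (wL wR : ℕ × ℕ × ℕ → ℂ),
      (∀ w, g * qMonomial ρ w = wL w • qMonomial ρ (w + d)) →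
      (∀ w, qMonomial ρ w * g = wR w • qMonomial ρ (w + d)) → wL v = wR v := by
    intro g d wL wR hL hR
    have hL' := b.repr_apply_eq_mul_of_apply_basis_eq_smul (f := LinearMap.mulLeft ℂ g)
      (add_left_injective d) (fun w => by simpa [b] using hL w) u v
    have hR' := b.repr_apply_eq_mul_of_apply_basis_eq_smul (f := LinearMap.mulRight ℂ g)
      (add_left_injective d) (fun w => by simpa [b] using hR w) u v
    simp only [LinearMap.mulLeft_apply, LinearMap.mulRight_apply, hcomm] at hL' hR'
    exact mul_right_cancel₀ hv (hL'.symm.trans hR')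
  have hX := hweight (qX ρ) (1, 0, 0) 1 _ (by simpa using qX_mul_qMonomial) (qMonomial_mul_qX hρ)
  have hZ := hweight (qZ ρ) (0, 0, 1) _ 1 (qZ_mul_qMonomial hρ) (by simpa using qMonomial_mul_qZ)
  exact ⟨(pow_mul_inv_pow_eq_one_iff hρ _ _).mp hZ,
    ((pow_mul_inv_pow_eq_one_iff hρ _ _).mp hX.symm).symm⟩

end Center

lemma qMonomial_mem_adjoin {n : ℕ} {ρ : ℂ} (hρ : IsPrimitiveRoot ρ n) (hρ0 : ρ ≠ 0)
    {v : ℕ × ℕ × ℕ} (hxy : ρ ^ v.1 = ρ ^ v.2.1) (hyz : ρ ^ v.2.1 = ρ ^ v.2.2) :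
    qMonomial ρ v ∈ Algebra.adjoin ℂ {qX ρ ^ n, qY ρ ^ n, qZ ρ ^ n, qX ρ * qY ρ * qZ ρ} := by
  set S := Algebra.adjoin ℂ {qX ρ ^ n, qY ρ ^ n, qZ ρ ^ n, qX ρ * qY ρ * qZ ρ}
  let M : AddSubmonoid (ℕ × ℕ × ℕ) :=
    { carrier := {v | qMonomial ρ v ∈ S}
      zero_mem' := by simp [qMonomial]
      add_mem' := fun {v w} hv hw => by
        have hvw := S.mul_mem hv hw
        rw [qMonomial_mul_qMonomial hρ0] at hvw
        exact (Submodule.smul_mem_iff (Subalgebra.toSubmodule S) (by simp [hρ0])).mp hvw }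
  have hgen : ∀ g ∈ ({(n, 0, 0), (0, n, 0), (0, 0, n), (1, 1, 1)} : Set (ℕ × ℕ × ℕ)), g ∈ M := by
    rintro _ (rfl | rfl | rfl | rfl) <;>
      exact Algebra.subset_adjoin (by simp [qMonomial])
  have hmod : ∀ {k l : ℕ}, ρ ^ k = ρ ^ l → k % n = l % n := fun h => by
    rw [← Nat.ModEq, Nat.modEq_iff_dvd, ← hρ.zpow_eq_one_iff_dvd, zpow_sub₀ hρ0, zpow_natCast,
      zpow_natCast, h, div_self (pow_ne_zero _ hρ0)]
  obtain ⟨a, b, c⟩ := v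
  have hv : (a, b, c) = (a / n) • (n, 0, 0) + (b / n) • (0, n, 0) + (c / n) • (0, 0, n) +
      (a % n) • (1, 1, 1) := by
    have := hmod hxy
    have := hmod hyz
    simp only [Prod.smul_mk, smul_eq_mul, Prod.mk_add_mk, mul_zero, mul_one, add_zero, zero_add,
      Prod.mk.injEq]
    refine ⟨?_, ?_, ?_⟩ <;> linarith [Nat.div_add_mod a n, Nat.div_add_mod b n, Nat.div_add_mod c n]
  change (a, b, c) ∈ M
  rw [hv]
  refine add_mem (add_mem (add_mem ?_ ?_) ?_) ?_ <;> exact nsmul_mem (hgen _ (by simp)) _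

/-- For `n > 1` and `ρ` a primitive `n`-th root of unity, the center of
`ℂ_ρ[x,y,z]` is the subalgebra generated by the images of `x^n, y^n, z^n, xyz`. -/
theorem center_eq_adjoin (n : ℕ) (hn : 1 < n) (ρ : ℂ) (hρ : IsPrimitiveRoot ρ n) :
    Subalgebra.center ℂ (QuantumAlg ρ) =
      Algebra.adjoin ℂ {qX ρ ^ n, qY ρ ^ n, qZ ρ ^ n, qX ρ * qY ρ * qZ ρ} := by
  have hρ0 : ρ ≠ 0 := hρ.ne_zero (by omega)
  have hρn : ρ ^ n = 1 := hρ.pow_eq_one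
  refine le_antisymm (fun u hu => ?_) (Algebra.adjoin_le ?_)
  · rw [← (qMonomialBasis hρ0).linearCombination_repr u, Finsupp.linearCombination_apply]
    refine Subalgebra.sum_mem _ fun v hv => Subalgebra.smul_mem _ ?_ _
    obtain ⟨hxy, hyz⟩ := pow_eq_pow_of_mem_center hρ0 hu (Finsupp.mem_support_iff.mp hv)
    simpa using qMonomial_mem_adjoin hρ hρ0 hxy hyz
  · intro g hg
    rw [SetLike.mem_coe]
    rcases hg with rfl | rfl | rfl | rfl
    · simpa [qMonomial] using qMonomial_mem_center hρ0 (v := (n, 0, 0)) (by simp [hρn]) rfl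
    · simpa [qMonomial] using
        qMonomial_mem_center hρ0 (v := (0, n, 0)) (by simp [hρn]) (by simp [hρn])
    · simpa [qMonomial] using qMonomial_mem_center hρ0 (v := (0, 0, n)) rfl (by simp [hρn])
    · simpa [qMonomial] using qMonomial_mem_center hρ0 (v := (1, 1, 1)) rfl rfl
end

section
/- Let ρ ∈ ℂ be nonzero and let A = ℂ_ρ[x,y,z] be the quotient of the free ℂ-algebra on x, y, z by the two-sided ideal generated by xy − ρyx, yz − ρzy, zx − ρxz. Then A is finitely generated as a module over its center Z(A) if and only if ρ is a root of unity. -/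
/-!
If `ρ ^ k = 1`, the powers `x ^ k`, `y ^ k`, `z ^ k` are central, and since the ordered
monomials `x ^ a * y ^ b * z ^ c` span `ℂ_ρ[x,y,z]`, the finitely many monomials with exponents
below `k` generate it over the center.

Conversely, let `ℂ_ρ[x,y,z]` act on `ℂ[t]` with `x` acting as `p(t) ↦ p(ρ t)`, `y` as
multiplication by `t` and `z` as `0`. A central element commutes with `x`, so it sends `1` to a
polynomial fixed by `p(t) ↦ p(ρ t)`; if `ρ` is not a root of unity, such a polynomial is constant.
Finiteness over the center would then put all `t ^ n = y ^ n • 1` into a finite-dimensional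
subspace.
-/

section General

variable {R A : Type*} [CommSemiring R] [Semiring A] [Algebra R A]

theorem pow_mul_of_mul_eq_smul {q : R} {a b : A} (h : a * b = q • (b * a)) (m : ℕ) :
    a ^ m * b = q ^ m • (b * a ^ m) := by
  induction m with
  | zero => simp
  | succ m ih =>
    rw [pow_succ, mul_assoc, h, mul_smul_comm, ← mul_assoc, ih, smul_mul_assoc, smul_smul,
      mul_assoc, ← pow_succ']

theorem mul_pow_of_mul_eq_smul {q : R} {a b : A} (h : a * b = q • (b * a)) (n : ℕ) :
    a * b ^ n = q ^ n • (b ^ n * a) := by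
  induction n with
  | zero => simp
  | succ n ih =>
    rw [pow_succ, ← mul_assoc, ih, smul_mul_assoc, mul_assoc, h, mul_smul_comm, smul_smul,
      ← mul_assoc, ← pow_succ, pow_succ]

theorem commute_pow_left_of_mul_eq_smul {q : R} {a b : A} (h : a * b = q • (b * a)) {k : ℕ}
    (hq : q ^ k = 1) : Commute (a ^ k) b := by
  rw [Commute, SemiconjBy, pow_mul_of_mul_eq_smul h, hq, one_smul]

theorem commute_pow_right_of_mul_eq_smul {q : R} {a b : A} (h : a * b = q • (b * a)) {k : ℕ}
    (hq : q ^ k = 1) : Commute a (b ^ k) := by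
  rw [Commute, SemiconjBy, mul_pow_of_mul_eq_smul h, hq, one_smul]

theorem mem_center_of_commute_of_adjoin_eq_top {s : Set A} (hs : Algebra.adjoin R s = ⊤)
    {g : A} (hg : ∀ a ∈ s, Commute a g) : g ∈ Subalgebra.center R A := by
  have hle : Algebra.adjoin R s ≤ Subalgebra.centralizer R {g} :=
    Algebra.adjoin_le fun a ha ↦
      (Subalgebra.mem_centralizer_iff R).2 <| by simpa using (hg a ha).eq.symm
  rw [hs] at hle
  exact Subalgebra.mem_center_iff.2 fun b ↦
    ((Subalgebra.mem_centralizer_iff R).1 (hle Algebra.mem_top) g rfl).symm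

theorem Submodule.span_eq_top_of_mul_mem {s t : Set A} (hs : Algebra.adjoin R s = ⊤)
    (h1 : (1 : A) ∈ span R t) (hmul : ∀ v ∈ t, ∀ g ∈ s, v * g ∈ span R t) :
    span R t = ⊤ := by
  have key : ∀ b : A, ∀ v ∈ span R t, v * b ∈ span R t := by
    intro b
    induction (hs ▸ Algebra.mem_top : b ∈ Algebra.adjoin R s) using Algebra.adjoin_induction with
    | mem g hg =>
      exact span_le (p := (span R t).comap (LinearMap.mulRight R g)).2 fun v hv ↦ hmul v hv g hg
    | algebraMap r =>
      exact fun v hv ↦ by rw [← Algebra.commutes, ← Algebra.smul_def]; exact smul_mem _ r hv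
    | add u w _ _ hu hw => exact fun v hv ↦ by rw [mul_add]; exact add_mem (hu v hv) (hw v hv)
    | mul u w _ _ hu hw => exact fun v hv ↦ by rw [← mul_assoc]; exact hw _ (hu v hv)
  exact eq_top_iff.2 fun b _ ↦ by simpa using key b 1 h1

end General

section FiniteOverCenter

variable {K A V : Type*} [CommSemiring K] [Semiring A] [Algebra K A] [AddCommMonoid V]
  [Module K V]

theorem exists_finset_forall_mem_span_of_finite_center
    [Module.Finite (Subalgebra.center K A) A] (φ : A →ₐ[K] Module.End K V) (v : V)
    (hv : ∀ z ∈ Subalgebra.center K A, φ z v ∈ K ∙ v) :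
    ∃ T : Finset V, ∀ a : A, φ a v ∈ Submodule.span K (T : Set V) := by
  classical
  obtain ⟨S, hS⟩ := Module.Finite.fg_top (R := Subalgebra.center K A) (M := A)
  refine ⟨S.image (φ · v), fun a ↦ ?_⟩
  induction (hS ▸ Submodule.mem_top : a ∈ Submodule.span _ (S : Set A)) using
    Submodule.span_induction with
  | mem s hs => exact Submodule.subset_span (by simpa using ⟨s, hs, rfl⟩)
  | zero => simp
  | add u w _ _ hu hw => simpa using add_mem hu hw
  | smul z u _ hu =>
    obtain ⟨c, hc⟩ := Submodule.mem_span_singleton.1 (hv z z.2)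
    rw [Subalgebra.smul_def, smul_eq_mul, ← Subalgebra.mem_center_iff.1 z.2 u, map_mul,
      Module.End.mul_apply, ← hc, map_smul]
    exact Submodule.smul_mem _ c hu

end FiniteOverCenter

namespace Polynomial

theorem eq_C_of_comp_C_mul_X_eq_self {R : Type*} [CommRing R] [IsDomain R] {c : R}
    (hc : ∀ n, 0 < n → c ^ n ≠ 1) {p : R[X]} (h : p.comp (C c * X) = p) :
    p = C (p.coeff 0) := by
  ext (_ | n)
  · simp
  · have hn := congr_arg (coeff · (n + 1)) h
    simp only [comp_C_mul_X_coeff] at hn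
    by_contra hp
    exact hc (n + 1) n.succ_pos ((mul_eq_left₀ (by simpa using hp)).1 hn)

end Polynomial

namespace QuantumAlg

open Polynomial

variable {ρ : ℂ}

theorem qX_mul_qY (ρ : ℂ) : qX ρ * qY ρ = ρ • (qY ρ * qX ρ) := by
  simpa [qX, qY] using RingQuot.mkAlgHom_rel ℂ (QuantumRel.xy (ρ := ρ))

theorem qY_mul_qZ (ρ : ℂ) : qY ρ * qZ ρ = ρ • (qZ ρ * qY ρ) := by
  simpa [qY, qZ] using RingQuot.mkAlgHom_rel ℂ (QuantumRel.yz (ρ := ρ))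

theorem qZ_mul_qX (ρ : ℂ) : qZ ρ * qX ρ = ρ • (qX ρ * qZ ρ) := by
  simpa [qZ, qX] using RingQuot.mkAlgHom_rel ℂ (QuantumRel.zx (ρ := ρ))

theorem adjoin_qX_qY_qZ (ρ : ℂ) : Algebra.adjoin ℂ {qX ρ, qY ρ, qZ ρ} = ⊤ := by
  have hgen : {qX ρ, qY ρ, qZ ρ} =
      RingQuot.mkAlgHom ℂ (QuantumRel ρ) '' Set.range (FreeAlgebra.ι ℂ) := by
    ext; simp [Fin.exists_fin_succ, qX, qY, qZ, freeGen, eq_comm]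
  rw [hgen, ← AlgHom.map_adjoin, FreeAlgebra.adjoin_range_ι, Algebra.map_top,
    AlgHom.range_eq_top]
  exact RingQuot.mkAlgHom_surjective ℂ _

section Lift

variable {B : Type*} [Semiring B] [Algebra ℂ B] (a b c : B)
  (hab : a * b = ρ • (b * a)) (hbc : b * c = ρ • (c * b)) (hca : c * a = ρ • (a * c))

noncomputable def lift : QuantumAlg ρ →ₐ[ℂ] B :=
  RingQuot.liftAlgHom ℂ ⟨FreeAlgebra.lift ℂ ![a, b, c], fun _ _ h ↦ by
    cases h <;> simpa [freeGen]⟩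

theorem lift_qX : lift a b c hab hbc hca (qX ρ) = a := by
  simp [lift, qX, freeGen]

theorem lift_qY : lift a b c hab hbc hca (qY ρ) = b := by
  simp [lift, qY, freeGen]

end Lift

theorem qY_mul_qX (hρ : ρ ≠ 0) : qY ρ * qX ρ = ρ⁻¹ • (qX ρ * qY ρ) := by
  rw [qX_mul_qY, smul_smul, inv_mul_cancel₀ hρ, one_smul]

theorem qZ_mul_qY (hρ : ρ ≠ 0) : qZ ρ * qY ρ = ρ⁻¹ • (qY ρ * qZ ρ) := by
  rw [qY_mul_qZ, smul_smul, inv_mul_cancel₀ hρ, one_smul]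

noncomputable def monomial (ρ : ℂ) (e : ℕ × ℕ × ℕ) : QuantumAlg ρ :=
  qX ρ ^ e.1 * qY ρ ^ e.2.1 * qZ ρ ^ e.2.2

theorem monomial_mul_qX (hρ : ρ ≠ 0) (a b c : ℕ) :
    monomial ρ (a, b, c) * qX ρ = (ρ ^ c * ρ⁻¹ ^ b) • monomial ρ (a + 1, b, c) := by
  simp only [monomial]
  rw [mul_assoc, pow_mul_of_mul_eq_smul (qZ_mul_qX ρ), mul_smul_comm, ← mul_assoc,
    mul_assoc (qX ρ ^ a), pow_mul_of_mul_eq_smul (qY_mul_qX hρ), mul_smul_comm, smul_mul_assoc,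
    smul_smul, ← mul_assoc, ← pow_succ]

theorem monomial_mul_qY (hρ : ρ ≠ 0) (a b c : ℕ) :
    monomial ρ (a, b, c) * qY ρ = ρ⁻¹ ^ c • monomial ρ (a, b + 1, c) := by
  simp only [monomial]
  rw [mul_assoc, pow_mul_of_mul_eq_smul (qZ_mul_qY hρ), mul_smul_comm, ← mul_assoc,
    mul_assoc (qX ρ ^ a), ← pow_succ]

theorem monomial_mul_qZ (a b c : ℕ) :
    monomial ρ (a, b, c) * qZ ρ = monomial ρ (a, b, c + 1) := by
  simp only [monomial, pow_succ, mul_assoc]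

theorem span_monomial_eq_top (hρ : ρ ≠ 0) : Submodule.span ℂ (Set.range (monomial ρ)) = ⊤ := by
  refine Submodule.span_eq_top_of_mul_mem (adjoin_qX_qY_qZ ρ)
    (Submodule.subset_span ⟨(0, 0, 0), by simp [monomial]⟩) ?_
  rintro _ ⟨⟨a, b, c⟩, rfl⟩ g (rfl | rfl | rfl)
  · rw [monomial_mul_qX hρ]; exact Submodule.smul_mem _ _ (Submodule.subset_span ⟨_, rfl⟩)
  · rw [monomial_mul_qY hρ]; exact Submodule.smul_mem _ _ (Submodule.subset_span ⟨_, rfl⟩)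
  · rw [monomial_mul_qZ]; exact Submodule.subset_span ⟨_, rfl⟩

variable {k : ℕ}

theorem qX_pow_mem_center (hk : ρ ^ k = 1) : qX ρ ^ k ∈ Subalgebra.center ℂ (QuantumAlg ρ) := by
  refine mem_center_of_commute_of_adjoin_eq_top (adjoin_qX_qY_qZ ρ) ?_
  rintro _ (rfl | rfl | rfl)
  exacts [Commute.self_pow _ _, (commute_pow_left_of_mul_eq_smul (qX_mul_qY ρ) hk).symm,
    commute_pow_right_of_mul_eq_smul (qZ_mul_qX ρ) hk]

theorem qY_pow_mem_center (hk : ρ ^ k = 1) : qY ρ ^ k ∈ Subalgebra.center ℂ (QuantumAlg ρ) := by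
  refine mem_center_of_commute_of_adjoin_eq_top (adjoin_qX_qY_qZ ρ) ?_
  rintro _ (rfl | rfl | rfl)
  exacts [commute_pow_right_of_mul_eq_smul (qX_mul_qY ρ) hk, Commute.self_pow _ _,
    (commute_pow_left_of_mul_eq_smul (qY_mul_qZ ρ) hk).symm]

theorem qZ_pow_mem_center (hk : ρ ^ k = 1) : qZ ρ ^ k ∈ Subalgebra.center ℂ (QuantumAlg ρ) := by
  refine mem_center_of_commute_of_adjoin_eq_top (adjoin_qX_qY_qZ ρ) ?_
  rintro _ (rfl | rfl | rfl)
  exacts [(commute_pow_left_of_mul_eq_smul (qZ_mul_qX ρ) hk).symm,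
    commute_pow_right_of_mul_eq_smul (qY_mul_qZ ρ) hk, Commute.self_pow _ _]

theorem exists_mem_center_monomial_eq (hk : ρ ^ k = 1) (e : ℕ × ℕ × ℕ) :
    ∃ z ∈ Subalgebra.center ℂ (QuantumAlg ρ),
      monomial ρ e = z * monomial ρ (e.1 % k, e.2.1 % k, e.2.2 % k) := by
  obtain ⟨a, b, c⟩ := e
  have hY := pow_mem (qY_pow_mem_center hk) (b / k)
  have hZ := pow_mem (qZ_pow_mem_center hk) (c / k)
  refine ⟨_, mul_mem (mul_mem (pow_mem (qX_pow_mem_center hk) (a / k)) hY) hZ, ?_⟩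
  have hYk : ∀ g, Commute g _ := Subalgebra.mem_center_iff.1 hY
  have hZk : ∀ g, Commute g _ := Subalgebra.mem_center_iff.1 hZ
  have hsplit (g : QuantumAlg ρ) (n : ℕ) : g ^ n = (g ^ k) ^ (n / k) * g ^ (n % k) := by
    rw [← pow_mul, ← pow_add, Nat.div_add_mod]
  simp only [monomial]
  rw [hsplit (qX ρ) a, hsplit (qY ρ) b, hsplit (qZ ρ) c]
  simp only [mul_assoc]
  rw [(hYk _).left_comm, (hZk _).left_comm, (hZk _).left_comm]

theorem finite_center_of_pow_eq_one (hk₀ : 0 < k) (hk : ρ ^ k = 1) :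
    Module.Finite (Subalgebra.center ℂ (QuantumAlg ρ)) (QuantumAlg ρ) := by
  classical
  have hρ : ρ ≠ 0 := by rintro rfl; simp [zero_pow hk₀.ne'] at hk
  set Z := Subalgebra.center ℂ (QuantumAlg ρ)
  set E := Finset.range k ×ˢ Finset.range k ×ˢ Finset.range k
  have hle : Submodule.span ℂ (Set.range (monomial ρ)) ≤
      (Submodule.span Z (E.image (monomial ρ) : Set (QuantumAlg ρ))).restrictScalars ℂ := by
    refine Submodule.span_le.2 (Set.range_subset_iff.2 fun e ↦ ?_)
    obtain ⟨z, hz, he⟩ := exists_mem_center_monomial_eq hk e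
    rw [he]
    refine Submodule.smul_mem _ (⟨z, hz⟩ : Z) (Submodule.subset_span ?_)
    exact Finset.mem_coe.2 (Finset.mem_image_of_mem _ (by simp [E, Nat.mod_lt _ hk₀]))
  exact ⟨⟨E.image (monomial ρ),
    eq_top_iff.2 fun a _ ↦ hle (by rw [span_monomial_eq_top hρ]; trivial)⟩⟩

noncomputable def polynomialRep (ρ : ℂ) : QuantumAlg ρ →ₐ[ℂ] Module.End ℂ ℂ[X] :=
  lift (aeval (C ρ * X)).toLinearMap (LinearMap.mulLeft ℂ X) 0
    (LinearMap.ext fun p ↦ by simp [smul_eq_C_mul]; ring) (by simp) (by simp)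

theorem pow_eq_one_of_finite_center
    [Module.Finite (Subalgebra.center ℂ (QuantumAlg ρ)) (QuantumAlg ρ)] :
    ∃ k : ℕ, 0 < k ∧ ρ ^ k = 1 := by
  by_contra! hρ
  set φ := polynomialRep ρ
  have hcenter : ∀ z ∈ Subalgebra.center ℂ (QuantumAlg ρ), φ z 1 ∈ ℂ ∙ (1 : ℂ[X]) := by
    intro z hz
    have hfix : (φ z 1).comp (C ρ * X) = φ z 1 :=
      calc (φ z 1).comp (C ρ * X) = φ (qX ρ * z) 1 := by
            simp [φ, polynomialRep, lift_qX, comp_eq_aeval]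
        _ = φ (z * qX ρ) 1 := by rw [Subalgebra.mem_center_iff.1 hz]
        _ = φ z 1 := by simp [φ, polynomialRep, lift_qX]
    rw [eq_C_of_comp_C_mul_X_eq_self hρ hfix]
    exact Submodule.mem_span_singleton.2 ⟨(φ z 1).coeff 0, by simp [smul_eq_C_mul]⟩
  obtain ⟨T, hT⟩ := exists_finset_forall_mem_span_of_finite_center φ 1 hcenter
  have hXpow : ∀ n, φ (qY ρ ^ n) 1 = X ^ n := by
    simp [φ, polynomialRep, lift_qY, LinearMap.pow_mulLeft]
  have hind : LinearIndependent ℂ fun n : ℕ ↦ (X : ℂ[X]) ^ n := by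
    simpa [coe_basisMonomials, X_pow_eq_monomial] using (basisMonomials ℂ).linearIndependent
  have : Finite ℕ := hind.finite_of_le_span_finite _ T
    (Set.range_subset_iff.2 fun n ↦ hXpow n ▸ hT (qY ρ ^ n))
  exact not_finite ℕ

end QuantumAlg

theorem finite_over_center_iff_general (ρ : ℂ) :
    Module.Finite (Subalgebra.center ℂ (QuantumAlg ρ)) (QuantumAlg ρ) ↔
      ∃ k : ℕ, 0 < k ∧ ρ ^ k = 1 :=
  ⟨fun _ ↦ QuantumAlg.pow_eq_one_of_finite_center,
    fun ⟨_, hk₀, hk⟩ ↦ QuantumAlg.finite_center_of_pow_eq_one hk₀ hk⟩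

/-- For `ρ ≠ 0`, the quantum affine 3-space `ℂ_ρ[x,y,z]` is a finite module
over its center if and only if `ρ` is a root of unity. -/
theorem finite_over_center_iff (ρ : ℂ) (hρ : ρ ≠ 0) :
    Module.Finite (Subalgebra.center ℂ (QuantumAlg ρ)) (QuantumAlg ρ) ↔
      ∃ k : ℕ, 0 < k ∧ ρ ^ k = 1 :=
  finite_over_center_iff_general ρ
end

section
/- Let n > 1, let ρ ∈ ℂ be a primitive n-th root of unity, let P ∈ M_n(ℂ) be the cyclic shift matrix with entries P_{i,i+1 mod n} = 1 and zeros elsewhere, and let D = diag(1, ρ, …, ρ^{n−1}). Let α, β, γ ∈ ℂ with αβγ ≠ 0 and let 0 ≤ j < j' < n. Then there is no invertible matrix g ∈ GL_n(ℂ) with g^{−1}(αP)g = αP, g^{−1}(βD)g = βD, and g^{−1}(γρ^j D^{−1}P^{−1})g = γρ^{j'} D^{−1}P^{−1}; that is, the n representations of ℂ_ρ[x,y,z] given by x ↦ αP, y ↦ βD, z ↦ γρ^j D^{−1}P^{−1} for j = 0, …, n−1 are pairwise non-isomorphic. -/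
/-- The cyclic shift matrix `P` with `P_{i, i+1 mod n} = 1` and zeros elsewhere. -/
def shiftP (n : ℕ) : Matrix (Fin n) (Fin n) ℂ :=
  Matrix.of fun i j => if (j : ℕ) = ((i : ℕ) + 1) % n then 1 else 0

/-- The diagonal matrix `D = diag(1, ρ, …, ρ^{n-1})`. -/
noncomputable def diagD (n : ℕ) (ρ : ℂ) : Matrix (Fin n) (Fin n) ℂ :=
  Matrix.diagonal fun i => ρ ^ (i : ℕ)

/-- for `ρ` a primitive `n`-th root of unity (`n > 1`), `αβγ ≠ 0` and
`0 ≤ j < j' < n`, no invertible matrix `g` satisfies `g⁻¹(αP)g = αP`, `g⁻¹(βD)g = βD` and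
`g⁻¹(γρ^j D⁻¹P⁻¹)g = γρ^{j'} D⁻¹P⁻¹`; i.e. the `n` representations
`x ↦ αP, y ↦ βD, z ↦ γρ^j D⁻¹P⁻¹`, `j = 0, …, n-1`, are pairwise non-isomorphic. -/
theorem representations_pairwise_nonisomorphic (n : ℕ) (hn : 1 < n) (ρ : ℂ)
    (hρ : IsPrimitiveRoot ρ n) (α β γ : ℂ) (hαβγ : α * β * γ ≠ 0)
    (j j' : ℕ) (hjj' : j < j') (hj' : j' < n) :
    ¬ ∃ g : Matrix (Fin n) (Fin n) ℂ, IsUnit g ∧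
        g⁻¹ * (α • shiftP n) * g = α • shiftP n ∧
        g⁻¹ * (β • diagD n ρ) * g = β • diagD n ρ ∧
        g⁻¹ * ((γ * ρ ^ j) • ((diagD n ρ)⁻¹ * (shiftP n)⁻¹)) * g =
          (γ * ρ ^ j') • ((diagD n ρ)⁻¹ * (shiftP n)⁻¹) := by
  rintro ⟨g, hg, h1, h2, h3⟩
  have hn0 : n ≠ 0 := by omega
  have hρ0 : ρ ≠ 0 := hρ.ne_zero hn0
  have hα : α ≠ 0 := by intro h; exact hαβγ (by simp [h])
  have hβ : β ≠ 0 := by intro h; exact hαβγ (by simp [h])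
  have hγ : γ ≠ 0 := by intro h; exact hαβγ (by simp [h])
  have modinj : ∀ a b : ℕ, a < n → b < n → (a + 1) % n = (b + 1) % n → a = b := by
    intro a b ha hb hab
    rcases eq_or_lt_of_le (Nat.succ_le_of_lt ha) with h1 | h1 <;>
      rcases eq_or_lt_of_le (Nat.succ_le_of_lt hb) with h2 | h2
    · omega
    · rw [show a + 1 = n from h1, Nat.mod_self, Nat.mod_eq_of_lt h2] at hab; omega
    · rw [show b + 1 = n from h2, Nat.mod_self, Nat.mod_eq_of_lt h1] at hab; omega
    · rw [Nat.mod_eq_of_lt h1, Nat.mod_eq_of_lt h2] at hab; omega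
  set P := shiftP n with hPdef
  set D := diagD n ρ with hDdef
  have hgdet : IsUnit g.det := (Matrix.isUnit_iff_isUnit_det g).mp hg
  have hgg : g * g⁻¹ = 1 := Matrix.mul_nonsing_inv g hgdet
  have hig : g⁻¹ * g = 1 := Matrix.nonsing_inv_mul g hgdet
  -- P * Pᵀ = 1
  have hPPt : P * P.transpose = 1 := by
    ext i k
    have ha : ((i : ℕ) + 1) % n < n := Nat.mod_lt _ (by omega)
    rw [Matrix.mul_apply, Fintype.sum_eq_single (⟨((i : ℕ) + 1) % n, ha⟩ : Fin n) ?_]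
    · by_cases h : i = k
      · subst h; simp [Matrix.one_apply, hPdef, shiftP]
      · have h2 : ¬ (((i : ℕ) + 1) % n = ((k : ℕ) + 1) % n) := by
          intro hh; exact h (Fin.ext (modinj _ _ i.isLt k.isLt hh))
        simp [Matrix.one_apply, hPdef, shiftP, h2, h]
    · intro b hb
      have : ¬ ((b : ℕ) = ((i : ℕ) + 1) % n) := fun hh => hb (Fin.ext hh)
      simp [hPdef, shiftP, this]
  have hPtP : P.transpose * P = 1 := (mul_eq_one_comm).mp hPPt
  have hPinv : P⁻¹ = P.transpose := Matrix.inv_eq_right_inv hPPt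
  have hPPi : P * P⁻¹ = 1 := by rw [hPinv]; exact hPPt
  have hPiP : P⁻¹ * P = 1 := by rw [hPinv]; exact hPtP
  -- D⁻¹ explicitly
  have hDinv : D⁻¹ = Matrix.diagonal (fun i : Fin n => (ρ ^ (i : ℕ))⁻¹) := by
    apply Matrix.inv_eq_right_inv
    rw [hDdef, diagD, Matrix.diagonal_mul_diagonal]
    ext i k
    by_cases h : i = k <;>
      simp [Matrix.diagonal_apply, h, Matrix.one_apply,
        mul_inv_cancel₀ (pow_ne_zero _ hρ0)]
  have hDD : D * D⁻¹ = 1 := by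
    rw [hDinv, hDdef, diagD, Matrix.diagonal_mul_diagonal]
    ext i k
    by_cases h : i = k <;>
      simp [Matrix.diagonal_apply, h, Matrix.one_apply,
        mul_inv_cancel₀ (pow_ne_zero _ hρ0)]
  have hDiD : D⁻¹ * D = 1 := mul_eq_one_comm.mp hDD
  -- g commutes with P and D
  have hP1 : g⁻¹ * P * g = P := by
    have h1' : α • (g⁻¹ * P * g) = α • P := by
      rw [← h1, Matrix.mul_smul, Matrix.smul_mul]
    exact smul_right_injective _ hα h1'
  have hPg : P * g = g * P := by
    have := congrArg (fun M => g * M) hP1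
    simpa [← Matrix.mul_assoc, hgg] using this
  have hD1 : g⁻¹ * D * g = D := by
    have h2' : β • (g⁻¹ * D * g) = β • D := by
      rw [← h2, Matrix.mul_smul, Matrix.smul_mul]
    exact smul_right_injective _ hβ h2'
  have hDg : D * g = g * D := by
    have := congrArg (fun M => g * M) hD1
    simpa [← Matrix.mul_assoc, hgg] using this
  -- g commutes with P⁻¹ and D⁻¹
  have hPig : P⁻¹ * g = g * P⁻¹ := by
    calc P⁻¹ * g = P⁻¹ * (g * P) * P⁻¹ := by
          rw [Matrix.mul_assoc, Matrix.mul_assoc, hPPi, Matrix.mul_one]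
    _ = P⁻¹ * (P * g) * P⁻¹ := by rw [hPg]
    _ = g * P⁻¹ := by rw [← Matrix.mul_assoc, hPiP, Matrix.one_mul]
  have hDig : D⁻¹ * g = g * D⁻¹ := by
    calc D⁻¹ * g = D⁻¹ * (g * D) * D⁻¹ := by
          rw [Matrix.mul_assoc, Matrix.mul_assoc, hDD, Matrix.mul_one]
    _ = D⁻¹ * (D * g) * D⁻¹ := by rw [hDg]
    _ = g * D⁻¹ := by rw [← Matrix.mul_assoc, hDiD, Matrix.one_mul]
  -- hence g commutes with N = D⁻¹ * P⁻¹
  have hNg : (D⁻¹ * P⁻¹) * g = g * (D⁻¹ * P⁻¹) := by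
    rw [Matrix.mul_assoc, hPig, ← Matrix.mul_assoc, hDig, Matrix.mul_assoc]
  have h3' : (γ * ρ ^ j) • (D⁻¹ * P⁻¹) = (γ * ρ ^ j') • (D⁻¹ * P⁻¹) := by
    rw [← h3, Matrix.mul_smul, Matrix.smul_mul, Matrix.mul_assoc, hNg,
      ← Matrix.mul_assoc, hig, Matrix.one_mul]
  -- evaluate at entry (1,0)
  have h1n : (1 : ℕ) < n := hn
  have hNentry : (D⁻¹ * P⁻¹) ⟨1, h1n⟩ ⟨0, by omega⟩ = ρ⁻¹ := by
    rw [hPinv, hDinv, Matrix.diagonal_mul]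
    simp [Matrix.transpose_apply, hPdef, shiftP, Nat.mod_eq_of_lt hn]
  have hentry := congrFun (congrFun h3' ⟨1, h1n⟩) ⟨0, by omega⟩
  rw [Matrix.smul_apply, Matrix.smul_apply, hNentry] at hentry
  have hρinv : (ρ⁻¹ : ℂ) ≠ 0 := inv_ne_zero hρ0
  have hpow : ρ ^ j = ρ ^ j' := by
    have := mul_right_cancel₀ hρinv hentry
    exact mul_left_cancel₀ hγ this
  have := hρ.pow_inj (lt_trans hjj' hj') hj' hpow
  omega
end

section
/- Let n > 1 and let q ∈ ℂ be a primitive n-th root of unity. Let ℂ_q[u,v] be the quotient of the free ℂ-algebra on u, v by the two-sided ideal generated by uv − qvu. Then the center of ℂ_q[u,v] equals the ℂ-subalgebra generated by the images of u^n and v^n. -/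
/-!
The ordered monomials `vᵃuᵇ` form a `ℂ`-basis of `ℂ_q[u,v]`. They span because `uv = qvu` lets
every word be reordered, and they are independent because the left regular representation can
be written down directly on `ℕ × ℕ →₀ ℂ`, where `vᵃuᵇ` sends `δ₍₀,₀₎` to `δ₍ₐ,ᵦ₎`.
Since `u · vᵃuᵇ = qᵃ vᵃuᵇ⁺¹` while `vᵃuᵇ · u = vᵃuᵇ⁺¹`, and `v · vᵃuᵇ = vᵃ⁺¹uᵇ` while
`vᵃuᵇ · v = qᵇ vᵃ⁺¹uᵇ`, a central element only involves monomials with `qᵃ = qᵇ = 1`,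
that is `n ∣ a` and `n ∣ b`.
-/

/-- The generators of the free algebra on two variables. -/
noncomputable def freeGen2 (i : Fin 2) : FreeAlgebra ℂ (Fin 2) := FreeAlgebra.ι ℂ i

/-- The defining relation of the quantum plane `ℂ_q[u,v]`: `uv = q vu`. -/
inductive PlaneRel (q : ℂ) : FreeAlgebra ℂ (Fin 2) → FreeAlgebra ℂ (Fin 2) → Prop
  | uv : PlaneRel q (freeGen2 0 * freeGen2 1) (q • (freeGen2 1 * freeGen2 0))

/-- The quantum plane `ℂ_q[u,v]`. -/
noncomputable abbrev QuantumPlane (q : ℂ) := RingQuot (PlaneRel q)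

/-- The image of `u` in `ℂ_q[u,v]`. -/
noncomputable def qU (q : ℂ) : QuantumPlane q := RingQuot.mkAlgHom ℂ (PlaneRel q) (freeGen2 0)

/-- The image of `v` in `ℂ_q[u,v]`. -/
noncomputable def qV (q : ℂ) : QuantumPlane q := RingQuot.mkAlgHom ℂ (PlaneRel q) (freeGen2 1)

section Commutation

variable {R A : Type*} [CommSemiring R] [Semiring A] [Algebra R A] {q : R} {u v : A}

theorem mul_pow_eq_smul_of_mul_eq_smul (h : u * v = q • (v * u)) (c : ℕ) :
    u * v ^ c = q ^ c • (v ^ c * u) := by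
  induction c with
  | zero => simp
  | succ c ih =>
    rw [pow_succ, ← mul_assoc, ih, smul_mul_assoc, mul_assoc, h, mul_smul_comm, smul_smul,
      ← mul_assoc, pow_succ]

theorem pow_mul_pow_eq_smul_of_mul_eq_smul (h : u * v = q • (v * u)) (b c : ℕ) :
    u ^ b * v ^ c = q ^ (b * c) • (v ^ c * u ^ b) := by
  induction b with
  | zero => simp
  | succ b ih =>
    rw [pow_succ, mul_assoc, mul_pow_eq_smul_of_mul_eq_smul h, mul_smul_comm, ← mul_assoc, ih,
      smul_mul_assoc, smul_smul, mul_assoc, ← pow_succ, ← pow_add, add_one_mul, add_comm]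

end Commutation

theorem Module.Basis.repr_apply_eq_mul_of_apply_eq_smul {ι R M : Type*} [CommSemiring R]
    [AddCommMonoid M] [Module R M] (b : Module.Basis ι R M) {f : M →ₗ[R] M} {σ : ι → ι}
    (hσ : σ.Injective) {α : ι → R} (hf : ∀ j, f (b j) = α j • b (σ j)) (z : M) (i : ι) :
    b.repr (f z) (σ i) = α i * b.repr z i := by
  suffices Finsupp.lapply (σ i) ∘ₗ b.repr.toLinearMap ∘ₗ f =
      α i • (Finsupp.lapply i ∘ₗ b.repr.toLinearMap) from LinearMap.congr_fun this z
  refine b.ext fun j => ?_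
  simp only [LinearMap.comp_apply, LinearMap.smul_apply, hf, map_smul, LinearEquiv.coe_coe,
    Module.Basis.repr_self, Finsupp.lapply_apply, smul_eq_mul]
  by_cases hji : j = i
  · simp [hji]
  · simp [hji, hσ.eq_iff]

namespace QuantumPlane

variable (q : ℂ)

theorem qU_mul_qV : qU q * qV q = q • (qV q * qU q) := by
  simpa [qU, qV] using RingQuot.mkAlgHom_rel ℂ (PlaneRel.uv (q := q))

theorem adjoin_qU_qV : Algebra.adjoin ℂ {qU q, qV q} = ⊤ := by
  have hgen : {qU q, qV q} = RingQuot.mkAlgHom ℂ (PlaneRel q) '' Set.range (FreeAlgebra.ι ℂ) := by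
    ext x
    simp [Fin.exists_fin_two, qU, qV, freeGen2, eq_comm]
  rw [hgen, Algebra.adjoin_image, FreeAlgebra.adjoin_range_ι, Algebra.map_top,
    AlgHom.range_eq_top]
  exact RingQuot.mkAlgHom_surjective ℂ _

theorem mem_center_of_commute {x : QuantumPlane q} (hu : Commute x (qU q))
    (hv : Commute x (qV q)) : x ∈ Subalgebra.center ℂ (QuantumPlane q) := by
  refine Subalgebra.mem_center_iff.2 fun y => (Algebra.commute_of_mem_adjoin_of_forall_mem_commute
    (s := {qU q, qV q}) (by rw [adjoin_qU_qV]; trivial) ?_).symm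
  rintro _ (rfl | rfl)
  exacts [hu, hv]

theorem qU_pow_mem_center {n : ℕ} (hq : q ^ n = 1) :
    qU q ^ n ∈ Subalgebra.center ℂ (QuantumPlane q) := by
  refine mem_center_of_commute q ((Commute.refl _).pow_left n) ?_
  simpa [hq, Commute, SemiconjBy] using pow_mul_pow_eq_smul_of_mul_eq_smul (qU_mul_qV q) n 1

theorem qV_pow_mem_center {n : ℕ} (hq : q ^ n = 1) :
    qV q ^ n ∈ Subalgebra.center ℂ (QuantumPlane q) := by
  refine mem_center_of_commute q ?_ ((Commute.refl _).pow_left n)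
  simpa [hq, Commute, SemiconjBy] using
    (pow_mul_pow_eq_smul_of_mul_eq_smul (qU_mul_qV q) 1 n).symm

noncomputable def monomial (p : ℕ × ℕ) : QuantumPlane q := qV q ^ p.1 * qU q ^ p.2

theorem monomial_one_zero : monomial q (1, 0) = qV q := by simp [monomial]

theorem monomial_zero_one : monomial q (0, 1) = qU q := by simp [monomial]

theorem monomial_mul_monomial (p p' : ℕ × ℕ) :
    monomial q p * monomial q p' = q ^ (p.2 * p'.1) • monomial q (p + p') := by
  simp only [monomial, Prod.fst_add, Prod.snd_add, pow_add]
  rw [mul_assoc, ← mul_assoc (qU q ^ _), pow_mul_pow_eq_smul_of_mul_eq_smul (qU_mul_qV q)]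
  simp only [smul_mul_assoc, mul_smul_comm, mul_assoc]

theorem span_range_monomial : Submodule.span ℂ (Set.range (monomial q)) = ⊤ := by
  set S := Submodule.span ℂ (Set.range (monomial q))
  have one_mem : (1 : QuantumPlane q) ∈ S := by
    simpa [monomial] using Submodule.subset_span (R := ℂ) (Set.mem_range_self (f := monomial q) 0)
  have mul_mem {x y : QuantumPlane q} (hx : x ∈ S) (hy : y ∈ S) : x * y ∈ S := by
    have hxy := Submodule.mul_mem_mul hx hy
    rw [Submodule.span_mul_span] at hxy
    refine Submodule.span_le.2 ?_ hxy
    rintro _ ⟨_, ⟨p, rfl⟩, _, ⟨p', rfl⟩, rfl⟩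
    change monomial q p * monomial q p' ∈ S
    rw [monomial_mul_monomial]
    exact S.smul_mem _ (Submodule.subset_span ⟨_, rfl⟩)
  have hgen : Algebra.adjoin ℂ {qU q, qV q} ≤ S.toSubalgebra one_mem @mul_mem := by
    rw [Algebra.adjoin_le_iff]
    rintro _ (rfl | rfl)
    · exact Submodule.subset_span ⟨(0, 1), monomial_zero_one q⟩
    · exact Submodule.subset_span ⟨(1, 0), monomial_one_zero q⟩
  rw [adjoin_qU_qV] at hgen
  exact eq_top_iff.2 fun x _ => hgen trivial

noncomputable def shiftV : Module.End ℂ (ℕ × ℕ →₀ ℂ) :=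
  Finsupp.lmapDomain ℂ ℂ fun p => (p.1 + 1, p.2)

noncomputable def shiftU : Module.End ℂ (ℕ × ℕ →₀ ℂ) :=
  Finsupp.lsum ℂ fun p => q ^ p.1 • Finsupp.lsingle (p.1, p.2 + 1)

theorem shiftV_single (p : ℕ × ℕ) (c : ℂ) :
    shiftV (Finsupp.single p c) = Finsupp.single (p.1 + 1, p.2) c := by
  simp [shiftV]

theorem shiftU_single (p : ℕ × ℕ) (c : ℂ) :
    shiftU q (Finsupp.single p c) = q ^ p.1 • Finsupp.single (p.1, p.2 + 1) c := by
  simp [shiftU]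

theorem shiftU_mul_shiftV : shiftU q * shiftV = q • (shiftV * shiftU q) := by
  refine Finsupp.lhom_ext fun p c => ?_
  simp only [Module.End.mul_apply, LinearMap.smul_apply, shiftV_single, shiftU_single, map_smul,
    smul_smul, pow_succ']

noncomputable def rep : QuantumPlane q →ₐ[ℂ] Module.End ℂ (ℕ × ℕ →₀ ℂ) :=
  RingQuot.liftAlgHom ℂ ⟨FreeAlgebra.lift ℂ ![shiftU q, shiftV], by
    rintro _ _ ⟨⟩
    simpa [freeGen2] using shiftU_mul_shiftV q⟩

theorem rep_qU : rep q (qU q) = shiftU q := by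
  simp [rep, qU, freeGen2]

theorem rep_qV : rep q (qV q) = shiftV := by
  simp [rep, qV, freeGen2]

theorem shiftV_pow_single (a : ℕ) (p : ℕ × ℕ) (c : ℂ) :
    (shiftV ^ a) (Finsupp.single p c) = Finsupp.single (p.1 + a, p.2) c := by
  induction a with
  | zero => simp
  | succ a ih => rw [pow_succ', Module.End.mul_apply, ih, shiftV_single, add_assoc]

theorem shiftU_pow_single_zero (b k : ℕ) :
    (shiftU q ^ b) (Finsupp.single (0, k) 1) = Finsupp.single (0, k + b) 1 := by
  induction b with
  | zero => simp
  | succ b ih =>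
    rw [pow_succ', Module.End.mul_apply, ih, shiftU_single, pow_zero, one_smul, add_assoc]

theorem rep_monomial_apply_single_zero (p : ℕ × ℕ) :
    rep q (monomial q p) (Finsupp.single 0 1) = Finsupp.single p 1 := by
  simp only [monomial, map_mul, map_pow, rep_qU, rep_qV, Module.End.mul_apply]
  rw [Prod.zero_eq_mk, shiftU_pow_single_zero, shiftV_pow_single]
  simp

theorem linearIndependent_monomial : LinearIndependent ℂ (monomial q) := by
  refine LinearIndependent.of_comp (LinearMap.applyₗ (Finsupp.single 0 1) ∘ₗ (rep q).toLinearMap) ?_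
  convert Finsupp.linearIndependent_single_one ℂ (ℕ × ℕ) with p
  exact rep_monomial_apply_single_zero q p

noncomputable def monomialBasis : Module.Basis (ℕ × ℕ) ℂ (QuantumPlane q) :=
  .mk (linearIndependent_monomial q) (span_range_monomial q).ge

theorem monomialBasis_apply (p : ℕ × ℕ) : monomialBasis q p = monomial q p :=
  Module.Basis.mk_apply _ _ _

theorem pow_eq_one_of_repr_ne_zero {z : QuantumPlane q}
    (hz : z ∈ Subalgebra.center ℂ (QuantumPlane q)) {p : ℕ × ℕ}
    (hp : (monomialBasis q).repr z p ≠ 0) : q ^ p.1 = 1 ∧ q ^ p.2 = 1 := by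
  set b := monomialBasis q
  have coeff_eq {x : QuantumPlane q} {σ : ℕ × ℕ → ℕ × ℕ} (hσ : σ.Injective) {α β : ℕ × ℕ → ℂ}
      (hl : ∀ j, x * b j = α j • b (σ j)) (hr : ∀ j, b j * x = β j • b (σ j)) : α p = β p := by
    have hl' := b.repr_apply_eq_mul_of_apply_eq_smul (f := LinearMap.mulLeft ℂ x) hσ hl z p
    have hr' := b.repr_apply_eq_mul_of_apply_eq_smul (f := LinearMap.mulRight ℂ x) hσ hr z p
    rw [LinearMap.mulLeft_apply, Subalgebra.mem_center_iff.1 hz x,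
      ← LinearMap.mulRight_apply (R := ℂ), hr'] at hl'
    exact mul_right_cancel₀ hp hl'.symm
  constructor
  · refine coeff_eq (x := qU q) (α := fun j => q ^ j.1) (β := fun _ => 1)
      (add_right_injective (0, 1)) (fun j => ?_) (fun j => ?_) <;>
    simp [b, monomialBasis_apply, ← monomial_zero_one, monomial_mul_monomial, add_comm j]
  · refine (coeff_eq (x := qV q) (α := fun _ => 1) (β := fun j => q ^ j.2)
      (add_right_injective (1, 0)) (fun j => ?_) (fun j => ?_)).symm <;>
    simp [b, monomialBasis_apply, ← monomial_one_zero, monomial_mul_monomial, add_comm j]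

theorem monomial_mem_adjoin {n : ℕ} {p : ℕ × ℕ} (h₁ : n ∣ p.1) (h₂ : n ∣ p.2) :
    monomial q p ∈ Algebra.adjoin ℂ {qU q ^ n, qV q ^ n} := by
  obtain ⟨k, hk⟩ := h₁
  obtain ⟨l, hl⟩ := h₂
  rw [monomial, hk, hl, pow_mul, pow_mul]
  exact mul_mem (pow_mem (Algebra.subset_adjoin (by simp)) _)
    (pow_mem (Algebra.subset_adjoin (by simp)) _)

end QuantumPlane

theorem quantum_plane_center_general (n : ℕ) (q : ℂ) (hq : IsPrimitiveRoot q n) :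
    Subalgebra.center ℂ (QuantumPlane q) = Algebra.adjoin ℂ {qU q ^ n, qV q ^ n} := by
  refine le_antisymm (fun z hz => ?_) (Algebra.adjoin_le ?_)
  · rw [← (QuantumPlane.monomialBasis q).linearCombination_repr z, Finsupp.linearCombination_apply]
    refine Subalgebra.sum_mem _ fun p hp => Subalgebra.smul_mem _ ?_ _
    obtain ⟨h₁, h₂⟩ := QuantumPlane.pow_eq_one_of_repr_ne_zero q hz (Finsupp.mem_support_iff.1 hp)
    rw [QuantumPlane.monomialBasis_apply]
    exact QuantumPlane.monomial_mem_adjoin q (hq.dvd_of_pow_eq_one _ h₁) (hq.dvd_of_pow_eq_one _ h₂)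
  · rintro _ (rfl | rfl)
    exacts [QuantumPlane.qU_pow_mem_center q hq.pow_eq_one,
      QuantumPlane.qV_pow_mem_center q hq.pow_eq_one]

/-- for `n > 1` and `q` a primitive `n`-th root of unity, the center of the
quantum plane `ℂ_q[u,v]` is the subalgebra generated by the images of `uⁿ` and `vⁿ`. -/
theorem quantum_plane_center (n : ℕ) (hn : 1 < n) (q : ℂ) (hq : IsPrimitiveRoot q n) :
    Subalgebra.center ℂ (QuantumPlane q) = Algebra.adjoin ℂ {qU q ^ n, qV q ^ n} :=
  quantum_plane_center_general n q hq
end
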